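/- (Lemma 2.1, eq. (2.3)) Let a, b, c be real numbers with a·c·(b²−4ac) ≠ 0, and let p, q ≥ 0 be integers with p + q ≥ 2; set n := 2p + 2q. Then there exist real polynomials l̄₁, l̄₂ with deg l̄₁ ≤ ⌊(n−2)/4⌋ and deg l̄₂ ≤ ⌊n/4⌋ − 1, such that for every h ∈ ℝ and every closed curve γ at level h of H: I_{2p,2q}(γ) = l̄₁(h)·I_{0,2}(γ) + l̄₂(h)·I_{2,2}(γ). -/

import Mathlib

/-- The Hamiltonian H(x,y) = x² − y² + a·x⁴ + c·y⁴ + b·x²·y². -/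
noncomputable def Hfun (a b c x y : ℝ) : ℝ :=
  x ^ 2 - y ^ 2 + a * x ^ 4 + c * y ^ 4 + b * x ^ 2 * y ^ 2

/-- The line integral I_{i,j}(γ) = ∮_γ x^i y^j dx along a parametrized curve of period T. -/
noncomputable def lineInt (x y : ℝ → ℝ) (T : ℝ) (i j : ℕ) : ℝ :=
  ∫ t in (0:ℝ)..T, x t ^ i * y t ^ j * deriv x t

/-!
Write `J i j = ∮ x^i y^j dx`. On a closed curve at level `h`, integrating `x^i y^j (H - h) dx = 0`
and `x^(i+1) y^j dH = 0`, the latter after trading its `dy`-part for `dx`-integrals through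
`∮ d(x^k y^l) = 0`, gives two linear relations among the `J i j` with coefficients affine in `h`.
Give `h` weight 2 and `J (2p) (2q)` weight `p + q`. For `q ≥ 3` the relations express
`J (2p) (2q)` through moments of lower weight or of the same weight and smaller `q`, the leading
coefficient being a nonzero multiple of `c`; the two moments of a given weight with `q = 1, 2` are
solved together from lower weights by a `2 × 2` system with determinant a multiple of `b² - 4ac`.
Induction down to `J 0 2` and `J 2 2` produces the polynomials with their degree bounds.
-/

open Function Polynomial

section ClosedCurve

theorem Function.Periodic.integral_deriv_eq_zero {E : Type*} [NormedAddCommGroup E]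
    [NormedSpace ℝ E] [CompleteSpace E] {F : ℝ → E} {T : ℝ} (hF : ContDiff ℝ 1 F)
    (hT : Periodic F T) : ∫ t in (0:ℝ)..T, deriv F t = 0 := by
  rw [intervalIntegral.integral_deriv_eq_sub
      (fun t _ => (hF.differentiable one_ne_zero).differentiableAt)
      ((hF.continuous_deriv le_rfl).intervalIntegrable 0 T), sub_eq_zero]
  simpa using hT 0

variable {x y : ℝ → ℝ} {T : ℝ}

theorem lineInt_zero_right (hx : ContDiff ℝ 1 x) (hxT : Periodic x T) (i : ℕ) :
    lineInt x y T i 0 = 0 := by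
  have hderiv : ∀ t, deriv (fun t => x t ^ (i + 1)) t = (i + 1) * (x t ^ i * deriv x t) := by
    intro t
    refine ((hx.differentiable one_ne_zero t).hasDerivAt.pow (i + 1)).deriv.trans ?_
    push_cast
    ring
  have h := (hxT.comp (· ^ (i + 1))).integral_deriv_eq_zero (hx.pow (i + 1))
  simp only [hderiv, intervalIntegral.integral_const_mul, mul_eq_zero] at h
  simpa [lineInt] using h.resolve_left (by positivity)

-- `lineInt y x T l k` is `∮ x^k y^l dy`.
theorem lineInt_exact (hx : ContDiff ℝ 1 x) (hy : ContDiff ℝ 1 y) (hxT : Periodic x T)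
    (hyT : Periodic y T) (i j : ℕ) :
    ((i : ℝ) + 1) * lineInt x y T i (j + 1) + ((j : ℝ) + 1) * lineInt y x T j (i + 1) = 0 := by
  have hderiv : ∀ t, deriv (fun t => x t ^ (i + 1) * y t ^ (j + 1)) t =
      (i + 1) * (x t ^ i * y t ^ (j + 1) * deriv x t) +
        (j + 1) * (y t ^ j * x t ^ (i + 1) * deriv y t) := by
    intro t
    refine (((hx.differentiable one_ne_zero t).hasDerivAt.pow (i + 1)).mul
      ((hy.differentiable one_ne_zero t).hasDerivAt.pow (j + 1))).deriv.trans ?_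
    simp only [Pi.pow_apply]
    push_cast
    ring
  have h := ((hxT.comp (· ^ (i + 1))).mul (hyT.comp (· ^ (j + 1)))).integral_deriv_eq_zero
    ((hx.pow (i + 1)).mul (hy.pow (j + 1)))
  have := hx.continuous; have := hy.continuous
  have := hx.continuous_deriv le_rfl; have := hy.continuous_deriv le_rfl
  simp (disch := exact Continuous.intervalIntegrable (by fun_prop) _ _) only [hderiv,
    intervalIntegral.integral_add, intervalIntegral.integral_const_mul] at h
  exact h

theorem lineInt_level {a b c h : ℝ} (hx : ContDiff ℝ 1 x) (hy : Continuous y)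
    (hH : ∀ t, Hfun a b c (x t) (y t) = h) (i j : ℕ) :
    lineInt x y T (i + 2) j - lineInt x y T i (j + 2) + a * lineInt x y T (i + 4) j +
      c * lineInt x y T i (j + 4) + b * lineInt x y T (i + 2) (j + 2) = h * lineInt x y T i j := by
  have hpt : ∀ t, x t ^ (i + 2) * y t ^ j * deriv x t - x t ^ i * y t ^ (j + 2) * deriv x t +
      a * (x t ^ (i + 4) * y t ^ j * deriv x t) + c * (x t ^ i * y t ^ (j + 4) * deriv x t) +
      b * (x t ^ (i + 2) * y t ^ (j + 2) * deriv x t) -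
        h * (x t ^ i * y t ^ j * deriv x t) = 0 := by
    intro t
    rw [← hH t, Hfun]
    ring
  have hint := intervalIntegral.integral_congr (a := 0) (b := T) (μ := MeasureTheory.volume)
    (g := fun _ => 0) fun t _ => hpt t
  have := hx.continuous; have := hx.continuous_deriv le_rfl
  simp (disch := exact Continuous.intervalIntegrable (by fun_prop) _ _) only
    [intervalIntegral.integral_add, intervalIntegral.integral_sub,
      intervalIntegral.integral_const_mul, intervalIntegral.integral_zero] at hint
  unfold lineInt
  linear_combination hint

theorem lineInt_dHfun_eq_zero {a b c h : ℝ} (hx : ContDiff ℝ 1 x) (hy : ContDiff ℝ 1 y)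
    (hH : ∀ t, Hfun a b c (x t) (y t) = h) (i j : ℕ) :
    2 * lineInt x y T (i + 1) j + 4 * a * lineInt x y T (i + 3) j +
      2 * b * lineInt x y T (i + 1) (j + 2) - 2 * lineInt y x T (j + 1) i +
      4 * c * lineInt y x T (j + 3) i + 2 * b * lineInt y x T (j + 1) (i + 2) = 0 := by
  have hdH : ∀ t, (2 * x t + 4 * a * x t ^ 3 + 2 * b * x t * y t ^ 2) * deriv x t +
      (-2 * y t + 4 * c * y t ^ 3 + 2 * b * x t ^ 2 * y t) * deriv y t = 0 := by
    intro t
    have hx' := (hx.differentiable one_ne_zero t).hasDerivAt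
    have hy' := (hy.differentiable one_ne_zero t).hasDerivAt
    have hconst : HasDerivAt (fun s => Hfun a b c (x s) (y s)) 0 t := by
      rw [funext hH]
      exact hasDerivAt_const t h
    have := hconst.unique ((((hx'.pow 2).sub (hy'.pow 2)).add ((hx'.pow 4).const_mul a)).add
      ((hy'.pow 4).const_mul c) |>.add (((hx'.pow 2).const_mul b).mul (hy'.pow 2)))
    simp only [Pi.pow_apply] at this
    push_cast at this
    linear_combination -this
  have hpt : ∀ t, 2 * (x t ^ (i + 1) * y t ^ j * deriv x t) +
      4 * a * (x t ^ (i + 3) * y t ^ j * deriv x t) +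
      2 * b * (x t ^ (i + 1) * y t ^ (j + 2) * deriv x t) -
      2 * (y t ^ (j + 1) * x t ^ i * deriv y t) + 4 * c * (y t ^ (j + 3) * x t ^ i * deriv y t) +
      2 * b * (y t ^ (j + 1) * x t ^ (i + 2) * deriv y t) = 0 := by
    intro t
    linear_combination x t ^ i * y t ^ j * hdH t
  have hint := intervalIntegral.integral_congr (a := 0) (b := T) (μ := MeasureTheory.volume)
    (g := fun _ => 0) fun t _ => hpt t
  have := hx.continuous; have := hx.continuous_deriv le_rfl
  have := hy.continuous; have := hy.continuous_deriv le_rfl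
  simp (disch := exact Continuous.intervalIntegrable (by fun_prop) _ _) only
    [intervalIntegral.integral_add, intervalIntegral.integral_sub,
      intervalIntegral.integral_const_mul, intervalIntegral.integral_zero] at hint
  unfold lineInt
  linear_combination hint

structure IsCurveMoments (a b c h : ℝ) (J : ℕ → ℕ → ℝ) : Prop where
  zero_right (i : ℕ) : J i 0 = 0
  level (i j : ℕ) : J (i + 2) j - J i (j + 2) + a * J (i + 4) j + c * J i (j + 4) +
    b * J (i + 2) (j + 2) = h * J i j
  /-- `∮ x^(i+1) y^j dH = 0`, with each `∮ x^(k+1) y^l dy` replaced by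
  `-(k+1)/(l+1) ∮ x^k y^(l+1) dx` and denominators cleared. -/
  chain (i j : ℕ) : ((j : ℝ) + 2) * (j + 4) * (J (i + 2) j + 2 * a * J (i + 4) j) +
    b * (j + 4) * (j - i - 1) * J (i + 2) (j + 2) + (i + 1) * (j + 4) * J i (j + 2) -
    2 * c * (i + 1) * (j + 2) * J i (j + 4) = 0

theorem isCurveMoments_lineInt {a b c h : ℝ} (hx : ContDiff ℝ 1 x) (hy : ContDiff ℝ 1 y)
    (hxT : Periodic x T) (hyT : Periodic y T) (hH : ∀ t, Hfun a b c (x t) (y t) = h) :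
    IsCurveMoments a b c h (lineInt x y T) where
  zero_right := lineInt_zero_right hx hxT
  level := lineInt_level hx hy.continuous hH
  chain i j := by
    have e₁ := lineInt_exact hx hy hxT hyT i (j + 1)
    have e₂ := lineInt_exact hx hy hxT hyT i (j + 3)
    have e₃ := lineInt_exact hx hy hxT hyT (i + 2) (j + 1)
    push_cast at e₁ e₂ e₃
    linear_combination ((j : ℝ) + 2) * (j + 4) / 2 * lineInt_dHfun_eq_zero hx hy hH (i + 1) j +
      (j + 4) * e₁ - 2 * c * (j + 2) * e₂ - b * (j + 4) * e₃

end ClosedCurve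

namespace IsCurveMoments

variable {a b c h : ℝ} {J : ℕ → ℕ → ℝ}

theorem level_zero (hJ : IsCurveMoments a b c h J) (i : ℕ) :
    b * J (i + 2) 2 + c * J i 4 = J i 2 := by
  linear_combination hJ.level i 0 - hJ.zero_right (i + 2) - a * hJ.zero_right (i + 4) +
    h * hJ.zero_right i

theorem reduce_right (hJ : IsCurveMoments a b c h J) (i j : ℕ) :
    2 * c * ((j : ℝ) + 2) * (i + j + 5) * J i (j + 4) =
      2 * (j + 2) * (j + 4) * (h * J i j) - (j + 2) * (j + 4) * J (i + 2) j +
        (j + 4) * (i + 2 * j + 5) * J i (j + 2) -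
          b * (j + 4) * (i + j + 5) * J (i + 2) (j + 2) := by
  linear_combination 2 * ((j : ℝ) + 2) * (j + 4) * hJ.level i j - hJ.chain i j

theorem reduce_two (hJ : IsCurveMoments a b c h J) (i : ℕ) :
    ((i : ℝ) + 7) * (4 * a * J (i + 4) 2 + b * J (i + 2) 4) =
      4 * (i + 1) * (h * J i 2) - 4 * (i + 4) * J (i + 2) 2 + (i + 1) * J i 4 := by
  linear_combination 4 * ((i : ℝ) + 1) * hJ.level i 2 + hJ.chain i 2 / 2

end IsCurveMoments

namespace Polynomial

variable {R : Type*} [Semiring R] {n : ℕ} {p : R[X]}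

theorem X_mul_mem_degreeLE (hp : p ∈ degreeLE R n) : X * p ∈ degreeLE R ↑(n + 1) := by
  rw [mem_degreeLE] at hp ⊢
  calc (X * p).degree ≤ X.degree + p.degree := degree_mul_le X p
    _ ≤ 1 + n := add_le_add degree_X_le hp
    _ = ↑(n + 1) := by push_cast; exact add_comm 1 (n : WithBot ℕ)

theorem X_mul_mem_degreeLT [Nontrivial R] (hp : p ∈ degreeLT R n) :
    X * p ∈ degreeLT R (n + 1) := by
  rw [mem_degreeLT] at hp ⊢
  calc (X * p).degree = p.degree + 1 := by rw [X_mul, degree_mul_X]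
    _ < n + 1 := WithBot.add_lt_add_right WithBot.one_ne_bot hp
    _ = ↑(n + 1) := by push_cast; rfl

end Polynomial

/-- With `h` of weight 2 and `J i j` of weight `(i + j) / 2`, the degree bounds say that
`l₁(h) J 0 2` and `l₂(h) J 2 2` have weight at most `m`. -/
def Representable (a b c : ℝ) (m : ℕ) (f : ℝ → (ℕ → ℕ → ℝ) → ℝ) : Prop :=
  ∃ l₁ ∈ degreeLE ℝ ((m - 1) / 2 : ℕ), ∃ l₂ ∈ degreeLT ℝ (m / 2),
    ∀ h J, IsCurveMoments a b c h J → f h J = l₁.eval h * J 0 2 + l₂.eval h * J 2 2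

namespace Representable

variable {a b c : ℝ} {m n : ℕ} {f g : ℝ → (ℕ → ℕ → ℝ) → ℝ}

theorem add (hf : Representable a b c m f) (hg : Representable a b c m g) :
    Representable a b c m fun h J => f h J + g h J := by
  obtain ⟨l₁, hl₁, l₂, hl₂, hfl⟩ := hf
  obtain ⟨k₁, hk₁, k₂, hk₂, hgk⟩ := hg
  refine ⟨l₁ + k₁, add_mem hl₁ hk₁, l₂ + k₂, add_mem hl₂ hk₂, fun h J hJ => ?_⟩
  dsimp only
  rw [hfl h J hJ, hgk h J hJ, eval_add, eval_add]
  ring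

theorem const_mul (r : ℝ) (hf : Representable a b c m f) :
    Representable a b c m fun h J => r * f h J := by
  obtain ⟨l₁, hl₁, l₂, hl₂, hfl⟩ := hf
  refine ⟨r • l₁, Submodule.smul_mem _ r hl₁, r • l₂, Submodule.smul_mem _ r hl₂,
    fun h J hJ => ?_⟩
  dsimp only
  rw [hfl h J hJ, eval_smul, eval_smul, smul_eq_mul, smul_eq_mul]
  ring

theorem mono (hmn : m ≤ n) (hf : Representable a b c m f) : Representable a b c n f := by
  obtain ⟨l₁, hl₁, l₂, hl₂, hfl⟩ := hf
  exact ⟨l₁, degreeLE_mono (by gcongr) hl₁, l₂, degreeLT_mono (by gcongr) hl₂, hfl⟩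

theorem level_mul (hm : 1 ≤ m) (hf : Representable a b c m f) :
    Representable a b c (m + 2) fun h J => h * f h J := by
  obtain ⟨l₁, hl₁, l₂, hl₂, hfl⟩ := hf
  refine ⟨X * l₁, ?_, X * l₂, ?_, fun h J hJ => ?_⟩
  · rw [show (m + 2 - 1) / 2 = (m - 1) / 2 + 1 by omega]
    exact X_mul_mem_degreeLE hl₁
  · rw [show (m + 2) / 2 = m / 2 + 1 by omega]
    exact X_mul_mem_degreeLT hl₂
  · dsimp only
    rw [hfl h J hJ, eval_mul, eval_mul, eval_X]
    ring

theorem combine {V W S : ℝ → (ℕ → ℕ → ℝ) → ℝ} {k l : ℕ} (hV : Representable a b c m V)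
    (hW : Representable a b c k W) (hS : Representable a b c l S) (hm : 1 ≤ m)
    (hmn : m + 2 ≤ n) (hkn : k ≤ n) (hln : l ≤ n) (α β γ : ℝ) :
    Representable a b c n fun h J => α * (h * V h J) + β * W h J + γ * S h J :=
  ((((hV.level_mul hm).mono hmn).const_mul α).add ((hW.mono hkn).const_mul β)).add
    ((hS.mono hln).const_mul γ)

theorem of_mul_eq {M : ℝ} (hM : M ≠ 0) (hg : Representable a b c m g)
    (hfg : ∀ h J, IsCurveMoments a b c h J → M * f h J = g h J) : Representable a b c m f := by
  obtain ⟨l₁, hl₁, l₂, hl₂, hgl⟩ := hg.const_mul M⁻¹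
  refine ⟨l₁, hl₁, l₂, hl₂, fun h J hJ => ?_⟩
  rw [← hgl h J hJ]
  exact (eq_inv_mul_iff_mul_eq₀ hM).mpr (hfg h J hJ)

end Representable

def evenMoment (p q : ℕ) (_ : ℝ) (J : ℕ → ℕ → ℝ) : ℝ := J (2 * p) (2 * q)

def MomentReduces (a b c : ℝ) (p q : ℕ) : Prop := Representable a b c (p + q) (evenMoment p q)

namespace MomentReduces

variable {a b c : ℝ}

theorem zero_right (p : ℕ) : MomentReduces a b c p 0 :=
  ⟨0, zero_mem _, 0, zero_mem _, fun h J hJ => by simp [evenMoment, hJ.zero_right]⟩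

theorem zero_one : MomentReduces a b c 0 1 :=
  ⟨1, by simp [mem_degreeLE], 0, zero_mem _, fun h J _ => by simp [evenMoment]⟩

theorem one_one : MomentReduces a b c 1 1 :=
  ⟨0, zero_mem _, 1, by simp [mem_degreeLT], fun h J _ => by simp [evenMoment]⟩

theorem zero_two (hc : c ≠ 0) : MomentReduces a b c 0 2 :=
  .of_mul_eq hc ((zero_one.mono one_le_two).add (one_one.const_mul (-b))) fun h J hJ => by
    unfold evenMoment
    linear_combination hJ.level_zero 0

theorem pair (hdisc : b ^ 2 - 4 * a * c ≠ 0) {d : ℕ} (hV : MomentReduces a b c d 1)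
    (hW : MomentReduces a b c (d + 1) 1) (hS : MomentReduces a b c d 2) :
    MomentReduces a b c (d + 2) 1 ∧ MomentReduces a b c (d + 1) 2 := by
  have hM : (2 * d + 7 : ℝ) * (b ^ 2 - 4 * a * c) ≠ 0 := mul_ne_zero (by positivity) hdisc
  constructor
  · refine .of_mul_eq hM (.combine hV hW hS (by omega) (by omega) (by omega) (by omega)
      (-4 * c * (2 * d + 1)) (4 * c * (2 * d + 4) + b * (2 * d + 7)) (-c * (2 * d + 1)))
      fun h J hJ => ?_
    have hR := hJ.reduce_two (2 * d)
    push_cast at hR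
    unfold evenMoment
    linear_combination (2 * d + 7 : ℝ) * b * hJ.level_zero (2 * d + 2) - c * hR
  · refine .of_mul_eq hM (.combine hV hW hS (by omega) (by omega) (by omega) (by omega)
      (4 * b * (2 * d + 1)) (-(4 * a * (2 * d + 7) + 4 * b * (2 * d + 4))) (b * (2 * d + 1)))
      fun h J hJ => ?_
    have hR := hJ.reduce_two (2 * d)
    push_cast at hR
    unfold evenMoment
    linear_combination b * hR - 4 * a * (2 * d + 7 : ℝ) * hJ.level_zero (2 * d + 2)

theorem add_three (hc : c ≠ 0) {p q : ℕ} (hV : MomentReduces a b c p (q + 1))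
    (hW : MomentReduces a b c (p + 1) (q + 1)) (hS : MomentReduces a b c p (q + 2))
    (hU : MomentReduces a b c (p + 1) (q + 2)) : MomentReduces a b c p (q + 3) := by
  have hM : 2 * c * (2 * q + 4 : ℝ) * (2 * p + 2 * q + 7) ≠ 0 := by positivity
  refine .of_mul_eq hM ((Representable.combine hV hW hS (by omega) (by omega) (by omega)
      (by omega) (2 * (2 * q + 4) * (2 * q + 6)) (-((2 * q + 4) * (2 * q + 6)))
      ((2 * q + 6) * (2 * p + 4 * q + 9))).add
      ((hU.mono (by omega)).const_mul (-(b * (2 * q + 6) * (2 * p + 2 * q + 7)))))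
    fun h J hJ => ?_
  have hR := hJ.reduce_right (2 * p) (2 * q + 2)
  push_cast at hR
  unfold evenMoment
  linear_combination hR

end MomentReduces

theorem momentReduces {a b c : ℝ} (hc : c ≠ 0) (hdisc : b ^ 2 - 4 * a * c ≠ 0) :
    (p q : ℕ) → MomentReduces a b c p q
  | p, 0 => .zero_right p
  | 0, 1 => .zero_one
  | 1, 1 => .one_one
  | d + 2, 1 => (MomentReduces.pair hdisc (momentReduces hc hdisc d 1)
      (momentReduces hc hdisc (d + 1) 1) (momentReduces hc hdisc d 2)).1
  | 0, 2 => .zero_two hc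
  | d + 1, 2 => (MomentReduces.pair hdisc (momentReduces hc hdisc d 1)
      (momentReduces hc hdisc (d + 1) 1) (momentReduces hc hdisc d 2)).2
  | p, q + 3 => .add_three hc (momentReduces hc hdisc p (q + 1))
      (momentReduces hc hdisc (p + 1) (q + 1)) (momentReduces hc hdisc p (q + 2))
      (momentReduces hc hdisc (p + 1) (q + 2))
termination_by p q => 2 * (p + q) + q

theorem stmt6_general (a b c : ℝ) (habc : a * c * (b ^ 2 - 4 * a * c) ≠ 0)
    (p q : ℕ) :
    ∃ l1 l2 : Polynomial ℝ,
      l1.degree ≤ (((2 * p + 2 * q - 2) / 4 : ℕ) : WithBot ℕ) ∧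
      l2.degree < (((2 * p + 2 * q) / 4 : ℕ) : WithBot ℕ) ∧
      ∀ (h : ℝ) (x y : ℝ → ℝ) (T : ℝ), 0 < T →
        ContDiff ℝ 1 x → ContDiff ℝ 1 y →
        (∀ t : ℝ, x (t + T) = x t ∧ y (t + T) = y t) →
        (∀ t : ℝ, Hfun a b c (x t) (y t) = h) →
        lineInt x y T (2 * p) (2 * q) =
          l1.eval h * lineInt x y T 0 2 + l2.eval h * lineInt x y T 2 2 := by
  obtain ⟨l₁, hl₁, l₂, hl₂, hl⟩ := momentReduces
    (right_ne_zero_of_mul (left_ne_zero_of_mul habc)) (right_ne_zero_of_mul habc) p q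
  refine ⟨l₁, l₂, ?_, ?_, fun h x y T _ hx hy hper hH => hl h (lineInt x y T) ?_⟩
  · rw [show (2 * p + 2 * q - 2) / 4 = (p + q - 1) / 2 by omega]
    exact mem_degreeLE.mp hl₁
  · rw [show (2 * p + 2 * q) / 4 = (p + q) / 2 by omega]
    exact mem_degreeLT.mp hl₂
  · exact isCurveMoments_lineInt hx hy (fun t => (hper t).1) (fun t => (hper t).2) hH

theorem stmt6 (a b c : ℝ) (habc : a * c * (b ^ 2 - 4 * a * c) ≠ 0)
    (p q : ℕ) (hpq : 2 ≤ p + q) :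
    ∃ l1 l2 : Polynomial ℝ,
      l1.degree ≤ (((2 * p + 2 * q - 2) / 4 : ℕ) : WithBot ℕ) ∧
      l2.degree < (((2 * p + 2 * q) / 4 : ℕ) : WithBot ℕ) ∧
      ∀ (h : ℝ) (x y : ℝ → ℝ) (T : ℝ), 0 < T →
        ContDiff ℝ 1 x → ContDiff ℝ 1 y →
        (∀ t : ℝ, x (t + T) = x t ∧ y (t + T) = y t) →
        (∀ t : ℝ, Hfun a b c (x t) (y t) = h) →
        lineInt x y T (2 * p) (2 * q) =
          l1.eval h * lineInt x y T 0 2 + l2.eval h * lineInt x y T 2 2 :=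
  stmt6_general a b c habc p q
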